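/- arXiv:2112.14297 — 7 statements merged into one kernel-verified Lean document; each statement's English description precedes it below -/
import Mathlib

section
/- Let β < 0 and let U_e, U_s, U_o, c_e, c_s be real constants. Define the expected profit function Φ(p_e, p_s) = [e^{β p_e + U_e}(p_e − c_e) + e^{β p_s + U_s}(p_s − c_s)] / [e^{β p_e + U_e} + e^{β p_s + U_s} + e^{U_o}]. Then at any critical point (p_e*, p_s*) of Φ (a point where both partial derivatives vanish), the price difference satisfies p_e* − p_s* = c_e − c_s. -/
/-!
Fixing one price, Φ has the form `q ↦ (e^{βq+U}(q - c) + K) / (e^{βq+U} + C)`, whose derivative is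
`e^{βq+U} / (e^{βq+U} + C) · (1 + β (q - c - Φ))`. Hence at a critical point each markup equals
`Φ - 1/β`, the same value for both services.
-/

open Real

noncomputable section

/-- Profit as a function of the own price `q`, the other alternatives contributing the constant
profit `K` to the numerator and the constant weight `C` to the denominator. -/
def logitProfit (β U c K C q : ℝ) : ℝ :=
  (exp (β * q + U) * (q - c) + K) / (exp (β * q + U) + C)

theorem hasDerivAt_logitProfit (β U c K : ℝ) {C : ℝ} (hC : 0 < C) (q : ℝ) :
    HasDerivAt (logitProfit β U c K C)
      (exp (β * q + U) / (exp (β * q + U) + C) * (1 + β * (q - c - logitProfit β U c K C q))) q := by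
  have hexp : HasDerivAt (fun q => exp (β * q + U)) (exp (β * q + U) * β) q :=
    (((hasDerivAt_id q).const_mul β).add_const U).exp.congr_deriv (by simp)
  have hden : exp (β * q + U) + C ≠ 0 := by positivity
  refine (((hexp.mul ((hasDerivAt_id q).sub_const c)).add_const K).div (hexp.add_const C)
    hden).congr_deriv ?_
  simp only [logitProfit, id, Pi.mul_apply]
  field_simp
  ring

theorem sub_eq_logitProfit_sub_inv_of_deriv_eq_zero {β : ℝ} (hβ : β ≠ 0) (U c K : ℝ) {C : ℝ}
    (hC : 0 < C) {p : ℝ} (hp : deriv (logitProfit β U c K C) p = 0) :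
    p - c = logitProfit β U c K C p - β⁻¹ := by
  rw [(hasDerivAt_logitProfit β U c K hC p).deriv] at hp
  have hshare : exp (β * p + U) / (exp (β * p + U) + C) ≠ 0 := by positivity
  have hfoc := (mul_eq_zero.mp hp).resolve_left hshare
  field_simp
  linear_combination hfoc

end

/-- At any critical point of the MNL multi-product pricing profit function,
the price difference equals the cost difference. -/
theorem stmt_0 (β Ue Us Uo ce cs : ℝ) (hβ : β < 0)
    (Φ : ℝ → ℝ → ℝ)
    (hΦ : ∀ pe ps, Φ pe ps =
      (Real.exp (β * pe + Ue) * (pe - ce) + Real.exp (β * ps + Us) * (ps - cs)) /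
      (Real.exp (β * pe + Ue) + Real.exp (β * ps + Us) + Real.exp Uo))
    (pe ps : ℝ)
    (h1 : deriv (fun p => Φ p ps) pe = 0)
    (h2 : deriv (fun p => Φ pe p) ps = 0) :
    pe - ps = ce - cs := by
  have hΦe : (fun p => Φ p ps) =
      logitProfit β Ue ce (exp (β * ps + Us) * (ps - cs)) (exp (β * ps + Us) + exp Uo) := by
    funext q
    rw [hΦ, logitProfit, add_assoc]
  have hΦs : (fun p => Φ pe p) =
      logitProfit β Us cs (exp (β * pe + Ue) * (pe - ce)) (exp (β * pe + Ue) + exp Uo) := by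
    funext q
    rw [hΦ, logitProfit]
    congr 1 <;> ring
  have hmarkup_e := sub_eq_logitProfit_sub_inv_of_deriv_eq_zero hβ.ne _ _ _ (by positivity)
    (hΦe ▸ h1)
  have hmarkup_s := sub_eq_logitProfit_sub_inv_of_deriv_eq_zero hβ.ne _ _ _ (by positivity)
    (hΦs ▸ h2)
  rw [← hΦe] at hmarkup_e
  rw [← hΦs] at hmarkup_s
  linarith
end

section
/- Let β < 0 and let U_e, U_s, U_o, c_e, c_s be real constants. The function Φ(p_e, p_s) = [e^{β p_e + U_e}(p_e − c_e) + e^{β p_s + U_s}(p_s − c_s)] / [e^{β p_e + U_e} + e^{β p_s + U_s} + e^{U_o}] has at most one critical point, given explicitly by p_e* = (1/β)·( log[ e^{U_o} · W( (1 + e^{U_s − U_e + β c_s − β c_e}) e^{U_e + β c_e − 1} / e^{U_o} ) / (1 + e^{U_s − U_e + β c_s − β c_e}) ] − U_e ) and p_s* = p_e* − (c_e − c_s), where W is the principal branch of the Lambert W function. -/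
/-!
At a critical point of Φ both first-order conditions have the same right-hand side, so the
two margins `p - c` coincide. With the common margin `m`, the first condition collapses to
`e^{β pe + Ue} (1 + e^{Us - Ue + β cs - β ce}) = t e^{Uo}` with `t = -(β m + 1) ≥ 0`; multiplying
by `e^t` removes the price from the left-hand side, so `t` solves `t e^t = y` for an explicit
`y > 0`, hence `t = W y`, and taking logarithms recovers `pe`.
-/

open Real

theorem logit_profit_foc {β U c r s p : ℝ} (hs : exp (β * p + U) + s ≠ 0)
    (h : deriv (fun q => (exp (β * q + U) * (q - c) + r) / (exp (β * q + U) + s)) p = 0) :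
    (β * (p - c) + 1) * (exp (β * p + U) + s) = β * (exp (β * p + U) * (p - c) + r) := by
  have hexp : HasDerivAt (fun q => exp (β * q + U)) (exp (β * p + U) * β) p := by
    simpa using (((hasDerivAt_id p).const_mul β).add_const U).exp
  have hderiv : HasDerivAt (fun q => (exp (β * q + U) * (q - c) + r) / (exp (β * q + U) + s))
      (exp (β * p + U) * ((β * (p - c) + 1) * (exp (β * p + U) + s)
        - β * (exp (β * p + U) * (p - c) + r)) / (exp (β * p + U) + s) ^ 2) p :=
    (((hexp.mul ((hasDerivAt_id' p).sub_const c)).add_const r).div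
      (hexp.add_const s) hs).congr_deriv (by simp only [Pi.mul_apply]; ring)
  rw [hderiv.deriv, div_eq_zero_iff, or_iff_left (pow_ne_zero 2 hs)] at h
  exact sub_eq_zero.mp ((mul_eq_zero.mp h).resolve_left (exp_pos _).ne')

theorem price_eq_of_balance {β Ue Us Uo ce cs pe ps : ℝ} (hβ : β ≠ 0) {W : ℝ → ℝ}
    (hWinv : ∀ x : ℝ, 0 ≤ x → W (x * exp x) = x) (hps : ps = pe - (ce - cs))
    (hbal : exp (β * pe + Ue) + exp (β * ps + Us) + (β * (pe - ce) + 1) * exp Uo = 0) :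
    pe = (1 / β) * (log (exp Uo *
        W ((1 + exp (Us - Ue + β * cs - β * ce)) * exp (Ue + β * ce - 1) / exp Uo) /
        (1 + exp (Us - Ue + β * cs - β * ce))) - Ue) := by
  set A := exp (β * pe + Ue)
  set C := exp Uo
  set K := 1 + exp (Us - Ue + β * cs - β * ce)
  set t := -(β * (pe - ce) + 1) with ht_def
  have hK : 0 < K := by positivity
  have hB : exp (β * ps + Us) = A * exp (Us - Ue + β * cs - β * ce) := by
    rw [← exp_add, hps]; ring_nf
  have htC : t * C = K * A := by linear_combination -hbal + hB
  have ht : 0 ≤ t := nonneg_of_mul_nonneg_left (htC ▸ by positivity) (exp_pos Uo)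
  have hAt : A * exp t = exp (Ue + β * ce - 1) := by rw [← exp_add, ht_def]; ring_nf
  have hWt : W (K * exp (Ue + β * ce - 1) / C) = t := by
    have hy : K * exp (Ue + β * ce - 1) / C = t * exp t := by
      rw [← hAt, div_eq_iff (exp_pos Uo).ne']
      linear_combination -exp t * htC
    rw [hy, hWinv t ht]
  have hA : C * t / K = A := by
    field_simp
    linear_combination htC
  rw [hWt, hA, log_exp]
  field_simp
  ring

theorem stmt_1_general (β Ue Us Uo ce cs : ℝ) (hβ : β < 0)
    (W : ℝ → ℝ)
    (hWinv : ∀ x : ℝ, 0 ≤ x → W (x * Real.exp x) = x)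
    (Φ : ℝ → ℝ → ℝ)
    (hΦ : ∀ pe ps, Φ pe ps =
      (Real.exp (β * pe + Ue) * (pe - ce) + Real.exp (β * ps + Us) * (ps - cs)) /
      (Real.exp (β * pe + Ue) + Real.exp (β * ps + Us) + Real.exp Uo)) :
    ∀ pe ps : ℝ,
      deriv (fun p => Φ p ps) pe = 0 →
      deriv (fun p => Φ pe p) ps = 0 →
      pe = (1 / β) * (Real.log (Real.exp Uo *
              W ((1 + Real.exp (Us - Ue + β * cs - β * ce)) *
                  Real.exp (Ue + β * ce - 1) / Real.exp Uo) /
              (1 + Real.exp (Us - Ue + β * cs - β * ce))) - Ue)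
        ∧ ps = pe - (ce - cs) := by
  intro pe ps hcrit_e hcrit_s
  have foc_e := logit_profit_foc (β := β) (U := Ue) (c := ce)
    (r := exp (β * ps + Us) * (ps - cs)) (s := exp (β * ps + Us) + exp Uo) (by positivity)
    (by simpa only [hΦ, add_assoc] using hcrit_e)
  have foc_s := logit_profit_foc (β := β) (U := Us) (c := cs)
    (r := exp (β * pe + Ue) * (pe - ce)) (s := exp (β * pe + Ue) + exp Uo) (by positivity)
    (by convert hcrit_s using 2; funext q; rw [hΦ]; ring)
  have hD : β * (exp (β * pe + Ue) + exp (β * ps + Us) + exp Uo) ≠ 0 :=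
    mul_ne_zero hβ.ne (by positivity)
  have hm : ps - cs = pe - ce := mul_right_cancel₀ hD (by linear_combination foc_s - foc_e)
  have hps : ps = pe - (ce - cs) := by linarith
  refine ⟨price_eq_of_balance hβ.ne hWinv hps ?_, hps⟩
  rw [hm] at foc_e
  linear_combination foc_e

/-- The MNL multi-product pricing profit function has at most one critical point,
given in closed form via the Lambert W function. -/
theorem stmt_1 (β Ue Us Uo ce cs : ℝ) (hβ : β < 0)
    (W : ℝ → ℝ)
    (hWinv : ∀ x : ℝ, 0 ≤ x → W (x * Real.exp x) = x)
    (hW : ∀ y : ℝ, 0 ≤ y → 0 ≤ W y ∧ W y * Real.exp (W y) = y)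
    (Φ : ℝ → ℝ → ℝ)
    (hΦ : ∀ pe ps, Φ pe ps =
      (Real.exp (β * pe + Ue) * (pe - ce) + Real.exp (β * ps + Us) * (ps - cs)) /
      (Real.exp (β * pe + Ue) + Real.exp (β * ps + Us) + Real.exp Uo)) :
    ∀ pe ps : ℝ,
      deriv (fun p => Φ p ps) pe = 0 →
      deriv (fun p => Φ pe p) ps = 0 →
      pe = (1 / β) * (Real.log (Real.exp Uo *
              W ((1 + Real.exp (Us - Ue + β * cs - β * ce)) *
                  Real.exp (Ue + β * ce - 1) / Real.exp Uo) /
              (1 + Real.exp (Us - Ue + β * cs - β * ce))) - Ue)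
        ∧ ps = pe - (ce - cs) :=
  stmt_1_general β Ue Us Uo ce cs hβ W hWinv Φ hΦ
end

section
/- Let β < 0, let D₁, D₂ > 0, let c_{1,s}, c_{1,e}, c_{2,s}, c_{2,e}, c_{s,s} be real constants, and set C = c_{1,s} + c_{2,s} − c_{s,s}. Assume 0 < C ≤ −1/β. Then the function G(P_{1,s}, P_{1,e}, P_{2,s}, P_{2,e}) = P_{1,s}(log(D₁ P_{1,s}/(1 − P_{1,s} − P_{1,e})) − β c_{1,s}) + P_{1,e}(log(D₁ P_{1,e}/(1 − P_{1,s} − P_{1,e})) − β c_{1,e}) + P_{2,s}(log(D₂ P_{2,s}/(1 − P_{2,s} − P_{2,e})) − β c_{2,s}) + P_{2,e}(log(D₂ P_{2,e}/(1 − P_{2,s} − P_{2,e})) − β c_{2,e}) + β C · P_{1,s} P_{2,s} is convex on the open domain { P_{1,s}, P_{1,e}, P_{2,s}, P_{2,e} > 0, P_{1,s} + P_{1,e} < 1, P_{2,s} + P_{2,e} < 1 }. -/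
/-!
For one request with choice probabilities `x, y` and `s = 1 - x - y`, the objective splits as
`x log (D x / s) + y log (D y / s) = x log x + y log y + s log s - log s + (x + y) log D`,
a sum of convex functions of affine maps. Put `t = -β C ∈ [0, 1]` and let `z` be the first
probability of the other request. The coupling term is
`-t x z = t/2 (x - z)² - t/2 x² - t/2 z²`, and `x log x - t/2 x²` is still convex on `(0, 1)`
because its second derivative `1/x - t` is nonnegative there.
-/

open Real Set

lemma convexOn_mul_log_sub_sq {t : ℝ} (ht : t ≤ 1) :
    ConvexOn ℝ (Ioo 0 1) fun x => x * log x - t / 2 * x ^ 2 := by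
  refine convexOn_of_hasDerivWithinAt2_nonneg (convex_Ioo 0 1)
    (f' := fun x => log x + 1 - t * x) (f'' := fun x => x⁻¹ - t) ?_ ?_ ?_ ?_ <;>
    try rw [interior_Ioo]
  · exact fun x hx => by fun_prop (disch := exact hx.1.ne')
  · intro x hx
    refine (((hasDerivAt_id x).mul (hasDerivAt_log hx.1.ne')).sub
      ((hasDerivAt_pow 2 x).const_mul (t / 2))).hasDerivWithinAt.congr_deriv ?_
    simp only [one_mul, id_eq, mul_inv_cancel₀ hx.1.ne', Nat.cast_ofNat, Nat.add_one_sub_one,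
      pow_one]
    ring
  · intro x hx
    exact (((hasDerivAt_log hx.1.ne').add_const 1).sub
      ((hasDerivAt_id x).const_mul t)).hasDerivWithinAt.congr_deriv (by simp)
  · intro x hx
    linarith [(one_le_inv₀ hx.1).2 hx.2.le]

def pairSimplex : Set (ℝ × ℝ) := {q | 0 < q.1 ∧ 0 < q.2 ∧ q.1 + q.2 < 1}

lemma convex_pairSimplex : Convex ℝ pairSimplex :=
  (convex_halfSpace_gt (LinearMap.fst ℝ ℝ ℝ).isLinear 0).inter <|
    (convex_halfSpace_gt (LinearMap.snd ℝ ℝ ℝ).isLinear 0).inter <|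
      convex_halfSpace_lt (LinearMap.fst ℝ ℝ ℝ + LinearMap.snd ℝ ℝ ℝ).isLinear 1

lemma convexOn_logitObjective_sub_sq {D a b t : ℝ} (hD : D ≠ 0) (ht : t ≤ 1) :
    ConvexOn ℝ pairSimplex fun q : ℝ × ℝ =>
      q.1 * (log (D * q.1 / (1 - q.1 - q.2)) - a) +
        q.2 * (log (D * q.2 / (1 - q.1 - q.2)) - b) - t / 2 * q.1 ^ 2 := by
  let fst := LinearMap.fst ℝ ℝ ℝ
  let snd := LinearMap.snd ℝ ℝ ℝ
  let slack : ℝ × ℝ →ᵃ[ℝ] ℝ := AffineMap.const ℝ _ 1 - (fst + snd).toAffineMap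
  have hslack (q : ℝ × ℝ) : slack q = 1 - q.1 - q.2 := by
    simp only [slack, AffineMap.coe_sub, AffineMap.coe_const, Function.const_one,
      LinearMap.coe_toAffineMap, Pi.sub_apply, Pi.one_apply, LinearMap.add_apply, fst, snd,
      LinearMap.fst_apply, LinearMap.snd_apply]
    ring
  have h₁ := ((convexOn_mul_log_sub_sq ht).comp_linearMap fst).subset (s := pairSimplex)
    (fun q ⟨hx, _, hxy⟩ => ⟨hx, by simp only [fst, LinearMap.fst_apply]; linarith⟩)
    convex_pairSimplex
  have h₂ := (convexOn_mul_log.comp_linearMap snd).subset (s := pairSimplex)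
    (fun q ⟨_, hy, _⟩ => le_of_lt hy) convex_pairSimplex
  have h₃ := (convexOn_mul_log.comp_affineMap slack).subset (s := pairSimplex)
    (fun q ⟨_, _, hxy⟩ => by simp only [mem_preimage, hslack, mem_Ici]; linarith)
    convex_pairSimplex
  have h₄ := (strictConcaveOn_log_Ioi.concaveOn.neg.comp_affineMap slack).subset
    (s := pairSimplex) (fun q ⟨_, _, hxy⟩ => by simp only [mem_preimage, hslack, mem_Ioi]; linarith)
    convex_pairSimplex
  have h₅ := ((log D - a) • fst + (log D - b) • snd).convexOn convex_pairSimplex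
  refine ((((h₁.add h₂).add h₃).add h₄).add h₅).congr fun q ⟨hx, hy, hxy⟩ => ?_
  have hs : 1 - q.1 - q.2 ≠ 0 := by linarith
  simp only [fst, snd, LinearMap.coe_fst, LinearMap.coe_snd, Pi.add_apply, Function.comp_apply,
    hslack, Pi.neg_apply, LinearMap.add_apply, LinearMap.smul_apply, LinearMap.fst_apply,
    smul_eq_mul, LinearMap.snd_apply]
  rw [log_div (by positivity) hs, log_div (by positivity) hs, log_mul hD hx.ne',
    log_mul hD hy.ne']
  ring

theorem stmt_4_general (β D₁ D₂ c1s c1e c2s c2e : ℝ) (hβ : β < 0)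
    (hD₁ : 0 < D₁) (hD₂ : 0 < D₂)
    (C : ℝ) (hCpos : 0 < C) (hCb : C ≤ -1 / β) :
    ConvexOn ℝ
      {p : ℝ × ℝ × ℝ × ℝ | 0 < p.1 ∧ 0 < p.2.1 ∧ 0 < p.2.2.1 ∧ 0 < p.2.2.2 ∧
        p.1 + p.2.1 < 1 ∧ p.2.2.1 + p.2.2.2 < 1}
      (fun p : ℝ × ℝ × ℝ × ℝ =>
        p.1 * (Real.log (D₁ * p.1 / (1 - p.1 - p.2.1)) - β * c1s) +
        p.2.1 * (Real.log (D₁ * p.2.1 / (1 - p.1 - p.2.1)) - β * c1e) +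
        p.2.2.1 * (Real.log (D₂ * p.2.2.1 / (1 - p.2.2.1 - p.2.2.2)) - β * c2s) +
        p.2.2.2 * (Real.log (D₂ * p.2.2.2 / (1 - p.2.2.1 - p.2.2.2)) - β * c2e) +
        β * C * (p.1 * p.2.2.1)) := by
  set t := -(β * C)
  have ht₀ : 0 ≤ t := by nlinarith
  have ht₁ : t ≤ 1 := by linarith [(le_div_iff_of_neg hβ).1 hCb, mul_comm C β]
  let pair₁ : ℝ × ℝ × ℝ × ℝ →ₗ[ℝ] ℝ × ℝ :=
    (LinearMap.fst ℝ ℝ _).prod (LinearMap.fst ℝ ℝ (ℝ × ℝ) ∘ₗ LinearMap.snd ℝ ℝ _)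
  let pair₂ : ℝ × ℝ × ℝ × ℝ →ₗ[ℝ] ℝ × ℝ := LinearMap.snd ℝ ℝ (ℝ × ℝ) ∘ₗ LinearMap.snd ℝ ℝ _
  let gap : ℝ × ℝ × ℝ × ℝ →ₗ[ℝ] ℝ := LinearMap.fst ℝ ℝ _ - LinearMap.fst ℝ ℝ ℝ ∘ₗ pair₂
  have hdom : {p : ℝ × ℝ × ℝ × ℝ | 0 < p.1 ∧ 0 < p.2.1 ∧ 0 < p.2.2.1 ∧ 0 < p.2.2.2 ∧
      p.1 + p.2.1 < 1 ∧ p.2.2.1 + p.2.2.2 < 1} =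
      pair₁ ⁻¹' pairSimplex ∩ pair₂ ⁻¹' pairSimplex := by
    ext p
    simp only [pair₁, pair₂, pairSimplex, mem_ofPred_eq, preimage_ofPred_eq, LinearMap.prod_apply,
      LinearMap.coe_fst, LinearMap.coe_comp, LinearMap.coe_snd, Function.prod_apply,
      Function.comp_apply, mem_inter_iff]
    tauto
  have hconv := (convex_pairSimplex.linear_preimage pair₁).inter
    (convex_pairSimplex.linear_preimage pair₂)
  have h₁ := convexOn_logitObjective_sub_sq (a := β * c1s) (b := β * c1e) hD₁.ne' ht₁
    |>.comp_linearMap pair₁ |>.subset inter_subset_left hconv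
  have h₂ := convexOn_logitObjective_sub_sq (a := β * c2s) (b := β * c2e) hD₂.ne' ht₁
    |>.comp_linearMap pair₂ |>.subset inter_subset_right hconv
  have h₃ := ((even_two.convexOn_pow.smul (div_nonneg ht₀ zero_le_two)).comp_linearMap
    gap).subset (subset_univ _) hconv
  rw [hdom]
  refine ((h₁.add h₂).add h₃).congr fun p _ => ?_
  simp only [pair₁, pair₂, gap, LinearMap.coe_comp, LinearMap.coe_snd, smul_eq_mul,
    Pi.add_apply, Function.comp_apply, LinearMap.prod_apply, LinearMap.coe_fst,
    Function.prod_apply, LinearMap.sub_apply, LinearMap.fst_apply]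
  ring

/-- Convexity of the probability-space transformed batched pricing objective. -/
theorem stmt_4 (β D₁ D₂ c1s c1e c2s c2e css : ℝ) (hβ : β < 0)
    (hD₁ : 0 < D₁) (hD₂ : 0 < D₂)
    (C : ℝ) (hC : C = c1s + c2s - css) (hCpos : 0 < C) (hCb : C ≤ -1 / β) :
    ConvexOn ℝ
      {p : ℝ × ℝ × ℝ × ℝ | 0 < p.1 ∧ 0 < p.2.1 ∧ 0 < p.2.2.1 ∧ 0 < p.2.2.2 ∧
        p.1 + p.2.1 < 1 ∧ p.2.2.1 + p.2.2.2 < 1}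
      (fun p : ℝ × ℝ × ℝ × ℝ =>
        p.1 * (Real.log (D₁ * p.1 / (1 - p.1 - p.2.1)) - β * c1s) +
        p.2.1 * (Real.log (D₁ * p.2.1 / (1 - p.1 - p.2.1)) - β * c1e) +
        p.2.2.1 * (Real.log (D₂ * p.2.2.1 / (1 - p.2.2.1 - p.2.2.2)) - β * c2s) +
        p.2.2.2 * (Real.log (D₂ * p.2.2.2 / (1 - p.2.2.1 - p.2.2.2)) - β * c2e) +
        β * C * (p.1 * p.2.2.1)) :=
  stmt_4_general β D₁ D₂ c1s c1e c2s c2e hβ hD₁ hD₂ C hCpos hCb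
end

section
/- Under the assumptions of the batched pricing problem (β < 0, C = c_{1,s} + c_{2,s} − c_{s,s} > 0, 0 < P_{1,s}, P_{1,e}, P_{2,s}, P_{2,e} with P_{1,s}+P_{1,e} < 1 and P_{2,s}+P_{2,e} < 1), the 4×4 Hessian matrix H with entries H₁₁ = 1/P_{1,s} + 1/φ₁ + 1/φ₁², H₂₂ = 1/P_{1,e} + 1/φ₁ + 1/φ₁², H₃₃ = 1/P_{2,s} + 1/φ₂ + 1/φ₂², H₄₄ = 1/P_{2,e} + 1/φ₂ + 1/φ₂², H₁₂ = H₂₁ = 1/φ₁ + 1/φ₁², H₃₄ = H₄₃ = 1/φ₂ + 1/φ₂², H₁₃ = H₃₁ = βC, and all other entries zero, where φ₁ = 1 − P_{1,s} − P_{1,e} and φ₂ = 1 − P_{2,s} − P_{2,e}, is positive semidefinite whenever C ≤ min{−1/(β P_{1,s}), −1/(β P_{2,s})}. -/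
/-!
Writing `x = (a, b, c, d)` and `wᵢ = 1/φᵢ + 1/φᵢ²`, the quadratic form of `H` is
`(a²/P₁ₛ + c²/P₂ₛ + 2βC·ac) + b²/P₁ₑ + d²/P₂ₑ + w₁(a + b)² + w₂(c + d)²`.
All terms but the first are visibly nonnegative, and the condition on `C` says exactly that
`|βC| ≤ 1/P₁ₛ` and `|βC| ≤ 1/P₂ₛ`, which makes the first one at least `|βC|(|a| - |c|)²`.
-/

lemma add_add_two_mul_mul_mul_nonneg {u v k a c : ℝ} (hu : |k| ≤ u) (hv : |k| ≤ v) :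
    0 ≤ u * a ^ 2 + v * c ^ 2 + 2 * k * a * c := by
  have hcross : -(|k| * |a| * |c|) ≤ k * a * c := by
    simpa only [abs_mul] using neg_abs_le (k * a * c)
  have hu' : |k| * |a| ^ 2 ≤ u * a ^ 2 := by
    rw [sq_abs]; exact mul_le_mul_of_nonneg_right hu (sq_nonneg a)
  have hv' : |k| * |c| ^ 2 ≤ v * c ^ 2 := by
    rw [sq_abs]; exact mul_le_mul_of_nonneg_right hv (sq_nonneg c)
  nlinarith [mul_nonneg (abs_nonneg k) (sq_nonneg (|a| - |c|))]

lemma posSemidef_of_two_blocks_coupled {u₁ v₁ w₁ u₂ v₂ w₂ k : ℝ} (hv₁ : 0 ≤ v₁) (hv₂ : 0 ≤ v₂)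
    (hw₁ : 0 ≤ w₁) (hw₂ : 0 ≤ w₂) (hu₁ : |k| ≤ u₁) (hu₂ : |k| ≤ u₂) :
    (Matrix.of ![![u₁ + w₁, w₁, k, 0], ![w₁, v₁ + w₁, 0, 0],
      ![k, 0, u₂ + w₂, w₂], ![0, 0, w₂, v₂ + w₂]]).PosSemidef := by
  refine Matrix.posSemidef_iff_dotProduct_mulVec.mpr ⟨?_, fun x => ?_⟩
  · ext i j
    fin_cases i <;> fin_cases j <;> simp
  · have hcoupled := add_add_two_mul_mul_mul_nonneg (a := x 0) (c := x 2) hu₁ hu₂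
    have hsum : 0 ≤ (u₁ * x 0 ^ 2 + u₂ * x 2 ^ 2 + 2 * k * x 0 * x 2) + v₁ * x 1 ^ 2 +
        v₂ * x 3 ^ 2 + w₁ * (x 0 + x 1) ^ 2 + w₂ * (x 2 + x 3) ^ 2 := by
      positivity
    refine hsum.trans_eq ?_
    simp only [Fin.isValue, dotProduct, Pi.star_apply, star_trivial, Matrix.mulVec,
      Matrix.of_apply, Matrix.cons_val', Matrix.cons_val_fin_one, Fin.sum_univ_four,
      Matrix.cons_val_zero, Matrix.cons_val_one, Matrix.cons_val, zero_mul, add_zero, zero_add]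
    ring

lemma abs_mul_le_one_div_of_le_neg_one_div {β C p : ℝ} (hβ : β < 0) (hC : 0 < C) (hp : 0 < p)
    (h : C ≤ -1 / (β * p)) : |β * C| ≤ 1 / p := by
  have hβp : 0 < -(β * p) := by nlinarith
  rw [abs_of_neg (mul_neg_of_neg_of_pos hβ hC), le_div_iff₀ hp]
  rw [← neg_div_neg_eq, neg_neg, le_div_iff₀ hβp] at h
  linarith

/-- Positive semidefiniteness of the Hessian of the probability-space
transformed batched pricing objective. -/
theorem stmt_5 (β C P1s P1e P2s P2e : ℝ) (hβ : β < 0) (hC : 0 < C)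
    (hP1s : 0 < P1s) (hP1e : 0 < P1e) (hP2s : 0 < P2s) (hP2e : 0 < P2e)
    (h1 : P1s + P1e < 1) (h2 : P2s + P2e < 1)
    (φ₁ φ₂ : ℝ) (hφ₁ : φ₁ = 1 - P1s - P1e) (hφ₂ : φ₂ = 1 - P2s - P2e)
    (hcond : C ≤ min (-1 / (β * P1s)) (-1 / (β * P2s))) :
    (Matrix.of ![![1 / P1s + 1 / φ₁ + 1 / φ₁ ^ 2, 1 / φ₁ + 1 / φ₁ ^ 2, β * C, 0],
      ![1 / φ₁ + 1 / φ₁ ^ 2, 1 / P1e + 1 / φ₁ + 1 / φ₁ ^ 2, 0, 0],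
      ![β * C, 0, 1 / P2s + 1 / φ₂ + 1 / φ₂ ^ 2, 1 / φ₂ + 1 / φ₂ ^ 2],
      ![0, 0, 1 / φ₂ + 1 / φ₂ ^ 2, 1 / P2e + 1 / φ₂ + 1 / φ₂ ^ 2]]).PosSemidef := by
  obtain ⟨hcond₁, hcond₂⟩ := le_min_iff.mp hcond
  have hφ₁_pos : 0 < φ₁ := by linarith
  have hφ₂_pos : 0 < φ₂ := by linarith
  simp only [add_assoc]
  exact posSemidef_of_two_blocks_coupled (by positivity) (by positivity)
    (by positivity) (by positivity)
    (abs_mul_le_one_div_of_le_neg_one_div hβ hC hP1s hcond₁)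
    (abs_mul_le_one_div_of_le_neg_one_div hβ hC hP2s hcond₂)
end

section
/- The function h(P_s, P_e) = P_s log(P_s/(1 − P_s − P_e)) + P_e log(P_e/(1 − P_s − P_e)) is convex on the open domain {P_s > 0, P_e > 0, P_s + P_e < 1}. -/
/-!
With `z = 1 - x - y`, the function equals `x log x + y log y + z log z - log z`. Each summand is a
convex function of one of the affine coordinates `x`, `y`, `z`, and `-log` is convex, so the sum
is convex.
-/

open Real

lemma Real.mul_log_div (x : ℝ) {z : ℝ} (hz : z ≠ 0) : x * log (x / z) = x * log x - x * log z := by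
  rcases eq_or_ne x 0 with rfl | hx
  · simp
  · rw [log_div hx hz, mul_sub]

noncomputable def noPurchaseProb : ℝ × ℝ →ᵃ[ℝ] ℝ :=
  AffineMap.const ℝ (ℝ × ℝ) (1 : ℝ) - (LinearMap.fst ℝ ℝ ℝ + LinearMap.snd ℝ ℝ ℝ).toAffineMap

@[simp]
lemma noPurchaseProb_apply (p : ℝ × ℝ) : noPurchaseProb p = 1 - p.1 - p.2 := by
  simp only [noPurchaseProb, AffineMap.coe_sub, AffineMap.coe_const, Function.const_one,
    LinearMap.coe_toAffineMap, Pi.sub_apply, Pi.one_apply, LinearMap.add_apply,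
    LinearMap.fst_apply, LinearMap.snd_apply]
  ring

lemma convex_probSimplexInterior :
    Convex ℝ {p : ℝ × ℝ | 0 < p.1 ∧ 0 < p.2 ∧ p.1 + p.2 < 1} :=
  (convex_halfSpace_gt (LinearMap.fst ℝ ℝ ℝ).isLinear 0).inter
    ((convex_halfSpace_gt (LinearMap.snd ℝ ℝ ℝ).isLinear 0).inter
      (convex_halfSpace_lt (LinearMap.fst ℝ ℝ ℝ + LinearMap.snd ℝ ℝ ℝ).isLinear 1))

/-- Convexity of the negative-entropy term in the probability-space
single-customer MNL pricing objective. -/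
theorem stmt_11 :
    ConvexOn ℝ {p : ℝ × ℝ | 0 < p.1 ∧ 0 < p.2 ∧ p.1 + p.2 < 1}
      (fun p : ℝ × ℝ =>
        p.1 * Real.log (p.1 / (1 - p.1 - p.2)) +
          p.2 * Real.log (p.2 / (1 - p.1 - p.2))) := by
  set S := {p : ℝ × ℝ | 0 < p.1 ∧ 0 < p.2 ∧ p.1 + p.2 < 1}
  have hS := convex_probSimplexInterior
  have hP₀ : ∀ p ∈ S, 0 < noPurchaseProb p := fun p hp => by
    rw [noPurchaseProb_apply]; linarith [hp.2.2]
  have h₁ := (convexOn_mul_log.comp_linearMap (LinearMap.fst ℝ ℝ ℝ)).subset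
    (fun p hp => le_of_lt hp.1) hS
  have h₂ := (convexOn_mul_log.comp_linearMap (LinearMap.snd ℝ ℝ ℝ)).subset
    (fun p hp => le_of_lt hp.2.1) hS
  have h₃ := (convexOn_mul_log.comp_affineMap noPurchaseProb).subset
    (fun p hp => (hP₀ p hp).le) hS
  have h₄ := (strictConcaveOn_log_Ioi.concaveOn.neg.comp_affineMap noPurchaseProb).subset
    hP₀ hS
  refine (((h₁.add h₂).add h₃).add h₄).congr fun p hp => ?_
  have hz : 1 - p.1 - p.2 ≠ 0 := by linarith [hp.2.2]
  simp only [Pi.add_apply, Pi.neg_apply, Function.comp_apply, LinearMap.fst_apply,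
    LinearMap.snd_apply, noPurchaseProb_apply, mul_log_div _ hz]
  ring
end

section
/- Let x = e^{U_s}, y = e^{U_e}, D > 0, β < 0, and let d_s, d_e, m, c be real constants with p_s = (log x − d_s)/β, p_e = (log y − d_e)/β. If (x, y) with x, y > 0 satisfies both stationarity equations x + y + y·log(x/y) − (d_s + βm − d_e − βc)·y + D·log x + D(1 − d_s − βm) = 0 and x + y − x·log(x/y) + (d_s + βm − d_e − βc)·x + D·log y + D(1 − d_e − βc) = 0, then x = e^{d_s + βm − d_e − βc}·y, and hence p_e − p_s = c − m. -/
/-! Subtracting the second stationarity equation from the first factors as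
`(x + y + D) * (log (x / y) - k) = 0` with `k = d_s + β m - d_e - β c`; since `x + y + D > 0`
this gives `log (x / y) = k`. Exponentiating yields `x = e^k y`, and the price gap is read off
from `log x - log y = k` after dividing by `β`. -/

open Real

theorem log_div_eq_of_stationary {D k a b x y : ℝ} (hD : 0 ≤ D) (hx : 0 < x) (hy : 0 < y)
    (hab : a - b = k)
    (h1 : x + y + y * log (x / y) - k * y + D * log x + D * (1 - a) = 0)
    (h2 : x + y - x * log (x / y) + k * x + D * log y + D * (1 - b) = 0) :
    log (x / y) = k := by
  have hlog : log (x / y) = log x - log y := log_div hx.ne' hy.ne'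
  have hfactor : (x + y + D) * (log (x / y) - k) = 0 := by
    linear_combination h1 - h2 + D * hlog + D * hab
  have hpos : x + y + D ≠ 0 := by positivity
  exact sub_eq_zero.mp ((mul_eq_zero.mp hfactor).resolve_left hpos)

theorem eq_exp_mul_of_log_div_eq {x y k : ℝ} (hx : 0 < x) (hy : 0 < y)
    (h : log (x / y) = k) : x = exp k * y := by
  rw [← h, exp_log (div_pos hx hy), div_mul_cancel₀ x hy.ne']

theorem price_gap_eq_cost_gap {β ds de m c u v : ℝ} (hβ : β ≠ 0)
    (h : u - v = ds + β * m - de - β * c) :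
    (v - de) / β - (u - ds) / β = c - m := by
  rw [div_sub_div_same, div_eq_iff hβ]
  linear_combination -h

/-- The first-order conditions for sequential multi-product pricing force the
exponential relation between the choice weights, hence the price-difference
identity. -/
theorem stmt_12 (β D ds de m c x y ps pe : ℝ) (hβ : β < 0) (hD : 0 < D)
    (hx : 0 < x) (hy : 0 < y)
    (hps : ps = (Real.log x - ds) / β) (hpe : pe = (Real.log y - de) / β)
    (h1 : x + y + y * Real.log (x / y) - (ds + β * m - de - β * c) * y +
        D * Real.log x + D * (1 - ds - β * m) = 0)
    (h2 : x + y - x * Real.log (x / y) + (ds + β * m - de - β * c) * x +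
        D * Real.log y + D * (1 - de - β * c) = 0) :
    x = Real.exp (ds + β * m - de - β * c) * y ∧ pe - ps = c - m := by
  have hk : log (x / y) = ds + β * m - de - β * c :=
    log_div_eq_of_stationary (a := ds + β * m) (b := de + β * c) hD.le hx hy (by ring)
      (by linear_combination h1) (by linear_combination h2)
  refine ⟨eq_exp_mul_of_log_div_eq hx hy hk, ?_⟩
  rw [hps, hpe]
  exact price_gap_eq_cost_gap hβ.ne (log_div hx.ne' hy.ne' ▸ hk)
end

section
/- Let β < 0 and fix c, d ∈ ℝ and D > 0. The single-product MNL profit function g(p) = e^{βp + d}(p − c)/(e^{βp + d} + D) attains a maximum on ℝ, and any maximizer p* satisfies the first-order condition 1 + β(p* − c)·D/(e^{βp* + d} + D) = 0, i.e., p* = c − (e^{βp* + d} + D)/(βD). -/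
/-!
The profit `g` is continuous, nonpositive for `p ≤ c`, positive for `p > c` and tends to `0` as
`p → ∞` (the factor `e^{βp}` beats the linear margin since `β < 0`). So it exceeds its value at
`c + 1` only on a compact set, and the extreme value theorem gives a maximizer. A maximizer is a
critical point, and `g'(p) = E/(E+D) · (1 + β(p - c)D/(E+D))` with `E = e^{βp+d} > 0`, which gives
the first-order condition.
-/

open Real Filter Topology

theorem Continuous.exists_forall_ge_of_tendsto_atTop_zero {f : ℝ → ℝ} (hf : Continuous f)
    {a : ℝ} (ha : 0 < f a) (hbot : ∀ᶠ x in atBot, f x ≤ 0) (htop : Tendsto f atTop (𝓝 0)) :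
    ∃ x, ∀ y, f y ≤ f x := by
  refine hf.exists_forall_ge' a ?_
  rw [cocompact_eq_atBot_atTop, eventually_sup]
  exact ⟨hbot.mono fun x hx => hx.trans ha.le, htop.eventually (ge_mem_nhds ha)⟩

theorem tendsto_exp_mul_add_mul_sub_atTop {β : ℝ} (hβ : β < 0) (c d : ℝ) :
    Tendsto (fun p => exp (β * p + d) * (p - c)) atTop (𝓝 0) := by
  have hy : Tendsto (fun p : ℝ => -β * (p - c)) atTop atTop :=
    (tendsto_atTop_add_const_right _ _ tendsto_id).const_mul_atTop (neg_pos.mpr hβ)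
  have h := ((tendsto_pow_mul_exp_neg_atTop_nhds_zero 1).comp hy).const_mul
    (exp (d + β * c) / -β)
  rw [mul_zero] at h
  refine h.congr fun p => ?_
  rw [Function.comp_apply, pow_one, show -(-β * (p - c)) = β * (p - c) by ring,
    show β * p + d = (d + β * c) + β * (p - c) by ring, exp_add]
  field_simp [hβ.ne]
  rw [exp_add, exp_add]
  ring

noncomputable def mnlProfit (β c d D p : ℝ) : ℝ :=
  exp (β * p + d) * (p - c) / (exp (β * p + d) + D)

namespace mnlProfit

variable {β c d D : ℝ}

theorem denom_pos (hD : 0 ≤ D) (p : ℝ) : 0 < exp (β * p + d) + D := by positivity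

theorem continuous (hD : 0 ≤ D) : Continuous (mnlProfit β c d D) := by
  unfold mnlProfit
  exact Continuous.div (by fun_prop) (by fun_prop) fun p => (denom_pos hD p).ne'

theorem nonpos_of_le (hD : 0 ≤ D) {p : ℝ} (hp : p ≤ c) : mnlProfit β c d D p ≤ 0 :=
  div_nonpos_of_nonpos_of_nonneg
    (mul_nonpos_of_nonneg_of_nonpos (exp_pos _).le (sub_nonpos.mpr hp)) (denom_pos hD p).le

theorem pos_of_lt (hD : 0 ≤ D) {p : ℝ} (hp : c < p) : 0 < mnlProfit β c d D p :=
  div_pos (mul_pos (exp_pos _) (sub_pos.mpr hp)) (denom_pos hD p)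

theorem tendsto_atTop (hβ : β < 0) (hD : 0 < D) :
    Tendsto (mnlProfit β c d D) atTop (𝓝 0) := by
  have hexp : Tendsto (fun p => exp (β * p + d)) atTop (𝓝 0) :=
    tendsto_exp_atBot.comp <|
      tendsto_atBot_add_const_right _ d (tendsto_id.const_mul_atTop_of_neg hβ)
  have h := (tendsto_exp_mul_add_mul_sub_atTop hβ c d).div (hexp.add_const D)
    (by rw [zero_add]; exact hD.ne')
  rwa [zero_div] at h

theorem exists_forall_ge (hβ : β < 0) (hD : 0 < D) :
    ∃ p, ∀ q, mnlProfit β c d D q ≤ mnlProfit β c d D p :=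
  (continuous hD.le).exists_forall_ge_of_tendsto_atTop_zero (pos_of_lt hD.le (lt_add_one c))
    (eventually_atBot.mpr ⟨c, fun _ hp => nonpos_of_le hD.le hp⟩) (tendsto_atTop hβ hD)

theorem hasDerivAt (hD : 0 ≤ D) (p : ℝ) :
    HasDerivAt (mnlProfit β c d D)
      (exp (β * p + d) / (exp (β * p + d) + D) *
        (1 + β * (p - c) * D / (exp (β * p + d) + D))) p := by
  have hE : HasDerivAt (fun x => exp (β * x + d)) (exp (β * p + d) * β) p := by
    simpa using ((hasDerivAt_id p).const_mul β |>.add_const d).exp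
  have hden := (denom_pos (β := β) (d := d) hD p).ne'
  refine ((hE.mul ((hasDerivAt_id' p).sub_const c)).div (hE.add_const D) hden).congr_deriv ?_
  simp only [Pi.mul_apply]
  field_simp
  ring

theorem first_order_condition (hD : 0 ≤ D) {p : ℝ}
    (hp : ∀ q, mnlProfit β c d D q ≤ mnlProfit β c d D p) :
    1 + β * (p - c) * D / (exp (β * p + d) + D) = 0 := by
  have hcrit := IsLocalMax.hasDerivAt_eq_zero (Eventually.of_forall hp) (hasDerivAt hD p)
  exact (mul_eq_zero.mp hcrit).resolve_left (div_pos (exp_pos _) (denom_pos hD p)).ne'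

end mnlProfit

/-- The single-product MNL profit function attains a maximum, and any
maximizer satisfies the first-order condition. -/
theorem stmt_16 (β c d D : ℝ) (hβ : β < 0) (hD : 0 < D)
    (g : ℝ → ℝ)
    (hg : ∀ p, g p = Real.exp (β * p + d) * (p - c) / (Real.exp (β * p + d) + D)) :
    (∃ p : ℝ, ∀ q : ℝ, g q ≤ g p) ∧
    ∀ p : ℝ, (∀ q : ℝ, g q ≤ g p) →
      1 + β * (p - c) * D / (Real.exp (β * p + d) + D) = 0 ∧
      p = c - (Real.exp (β * p + d) + D) / (β * D) := by
  obtain rfl : g = mnlProfit β c d D := funext hg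
  refine ⟨mnlProfit.exists_forall_ge hβ hD, fun p hp => ?_⟩
  have hfoc := mnlProfit.first_order_condition hD.le hp
  refine ⟨hfoc, ?_⟩
  have hden := (mnlProfit.denom_pos (β := β) (d := d) hD.le p).ne'
  field_simp [hβ.ne, hD.ne'] at hfoc ⊢
  linarith
end
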